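/- Assume the half-grid hypotheses for a 16-point set Z = Z_a ∪ Z_b ∪ Z_c ∪ Z_d on four pairwise skew lines R_a, R_b, R_c, R_d in ℙ³. Then there exist x ∈ {a,b,c,d} and a projective transformation ψ of the line R_x (induced by a linear automorphism of the corresponding 2-dimensional subspace of ℂ⁴) such that ψ maps the 4-point set Z_x onto itself, ψ ≠ id, and ψ ∘ ψ ≠ id (i.e., ψ has order at least 3). In particular the quadruple Z_x admits a non-involutive symmetry, so it is harmonic or anharmonic. -/

import Mathlib

/-!
Put `A = R 0` and `B = R 1`. A line skew to both is the graph `{a + P a}` of an isomorphism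
`P : A ≃ B`; let `R 2` and `R 3` be the graphs of `N` and `M`. A line through `[a + P a]`
meeting `B` and the graph of `Q` meets `B` in `[Q a - P a]`. Applied to the transversals of the
grids `Z ∖ Z 3`, `Z ∖ Z 2` and `Z ∖ Z 0`, this shows that `Z 0` is invariant under the
projectivities of `R 0` induced by `f = N⁻¹ M` and by `f - 1`.

If `f` were a scalar `c`, the quadric `ω (π_A v) (N⁻¹ π_B v) = 0`, with `ω` a nonzero alternating
form on `A`, would contain `A`, `B` and the graphs of `N` and `c N`, hence `Z`. So `f` is not
scalar, and then `f²` and `(f - 1)² = f² - 2 f + 1` are not both scalar: `f` or `f - 1` induces a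
projectivity of order at least `3`.
-/

open Projectivization
open scoped LinearAlgebra.Projectivization

/-- The half-grid hypotheses for a 16-point set `Z = Z 0 ∪ Z 1 ∪ Z 2 ∪ Z 3` distributed
evenly on four pairwise skew lines `R 0, …, R 3` in `ℙ³` (lines are given by their
2-dimensional subspaces of `ℂ⁴`):
* each `Z x` consists of 4 distinct points of the line `ℙ(R x)`;
* no nonzero homogeneous quadratic form on `ℂ⁴` vanishes at all points of `Z`;
* for each `x`, the 12 points `Z ∖ Z x` form a (3,4)-grid with respect to the remaining
  three lines: there are four pairwise skew lines `ℓ 0, …, ℓ 3`, each meeting each line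
  `ℙ(R y)` (`y ≠ x`) in exactly one point, the 12 intersection points being exactly
  `Z ∖ Z x`. -/
structure HalfGridHyp (R : Fin 4 → Submodule ℂ (Fin 4 → ℂ))
    (Z : Fin 4 → Set (ℙ ℂ (Fin 4 → ℂ))) : Prop where
  finrank_eq : ∀ x, Module.finrank ℂ (R x) = 2
  skew : ∀ x y, x ≠ y → R x ⊓ R y = ⊥
  ncard_eq : ∀ x, (Z x).ncard = 4
  mem_line : ∀ x, ∀ p ∈ Z x, p.submodule ≤ R x
  no_quadric : ¬ ∃ q : QuadraticForm ℂ (Fin 4 → ℂ), q ≠ 0 ∧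
    ∀ x, ∀ p ∈ Z x, ∀ v ∈ Projectivization.submodule p, q v = 0
  grid : ∀ x : Fin 4, ∃ ℓ : Fin 4 → Submodule ℂ (Fin 4 → ℂ),
    (∀ i, Module.finrank ℂ (ℓ i) = 2) ∧
    (∀ i j, i ≠ j → ℓ i ⊓ ℓ j = ⊥) ∧
    (∀ i, ∀ y, y ≠ x → ∃! p : ℙ ℂ (Fin 4 → ℂ),
      p.submodule ≤ ℓ i ∧ p.submodule ≤ R y) ∧
    {p : ℙ ℂ (Fin 4 → ℂ) | ∃ i y, y ≠ x ∧ p.submodule ≤ ℓ i ∧ p.submodule ≤ R y}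
      = (⋃ y, Z y) \ Z x

open Module Function

section Projectivization

variable {K U V W : Type*} [Field K] [AddCommGroup U] [Module K U] [AddCommGroup V] [Module K V]
  [AddCommGroup W] [Module K W]

theorem Projectivization.map_map_of_comp_eq {f : U →ₗ[K] V} {g : V →ₗ[K] W} {h : U →ₗ[K] W}
    (hf : Injective f) (hg : Injective g) (hh : Injective h) (hgf : g ∘ₗ f = h) (p : ℙ K U) :
    map g hg (map f hf p) = map h hh p := by
  subst hgf
  induction p using ind
  rfl

theorem Projectivization.map_eq_of_eq_smul {f g : U →ₗ[K] V} (hf : Injective f)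
    (hg : Injective g) {c : K} (h : g = c • f) : map g hg = map f hf := by
  funext p
  induction p using ind with
  | h u hu => exact (mk_eq_mk_iff' K _ _ _ _).2 ⟨c, by simp [h]⟩

theorem Projectivization.submodule_map_le_range {f : U →ₗ[K] V} (hf : Injective f) (p : ℙ K U) :
    (map f hf p).submodule ≤ LinearMap.range f := by
  induction p using ind with
  | h u hu =>
    rw [map_mk, submodule_mk, Submodule.span_singleton_le_iff_mem]
    exact LinearMap.mem_range_self f u

theorem Projectivization.exists_map_eq_of_submodule_le_range {f : U →ₗ[K] V} (hf : Injective f)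
    {q : ℙ K V} (hq : q.submodule ≤ LinearMap.range f) : ∃ p, map f hf p = q := by
  obtain ⟨u, hu⟩ := hq (q.submodule_eq ▸ Submodule.mem_span_singleton_self q.rep)
  have hu0 : u ≠ 0 := by rintro rfl; exact q.rep_nonzero (by simpa using hu.symm)
  refine ⟨mk K u hu0, ?_⟩
  rw [map_mk, ← q.mk_rep, mk_eq_mk_iff']
  exact ⟨1, by simp [hu]⟩

theorem Projectivization.exists_eq_smul_one_of_map_eq_id {f : Module.End K U} (hf : Injective f)
    (h : map f hf = id) : ∃ c : K, f = c • 1 := by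
  refine LinearMap.exists_eq_smul_id_of_forall_notLinearIndependent fun u => ?_
  by_cases hu : u = 0
  · exact fun hli => hli.ne_zero 0 (by simp [hu])
  · have := congrFun h (mk K u hu)
    rw [map_mk, id_eq, mk_eq_mk_iff'] at this
    simpa [LinearIndependent.pair_iff' hu] using this

theorem Projectivization.map_surjective (e : U ≃ₗ[K] U) :
    Surjective (map (e : Module.End K U) e.injective) := fun p =>
  ⟨map e.symm.toLinearMap e.symm.injective p, by
    rw [map_map_of_comp_eq _ _ (LinearEquiv.refl K U).injective (by ext; simp)]; simp⟩

end Projectivization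

section Graph

variable {K V : Type*} [Field K] [AddCommGroup V] [Module K V] {A B : Submodule K V}

def graphMap (P : A →ₗ[K] B) : A →ₗ[K] V := A.subtype + B.subtype ∘ₗ P

@[simp]
theorem graphMap_apply (P : A →ₗ[K] B) (a : A) : graphMap P a = a + P a := rfl

theorem graphMap_zero : graphMap (0 : A →ₗ[K] B) = A.subtype := by
  ext; simp

theorem graphMap_injective (hAB : Disjoint A B) (P : A →ₗ[K] B) : Injective (graphMap P) := by
  refine (injective_iff_map_eq_zero _).2 fun a ha => ?_
  have haB : (a : V) ∈ B := by
    rw [graphMap_apply, add_eq_zero_iff_eq_neg] at ha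
    exact ha ▸ B.neg_mem (P a).2
  exact Subtype.ext (Submodule.disjoint_def.1 hAB _ a.2 haB)

theorem injective_sub_of_disjoint_range_graphMap (hAB : Disjoint A B) {P Q : A →ₗ[K] B}
    (hPQ : Disjoint (LinearMap.range (graphMap P)) (LinearMap.range (graphMap Q))) :
    Injective (Q - P) := by
  refine (injective_iff_map_eq_zero _).2 fun a ha => graphMap_injective hAB P ?_
  have hPa : graphMap P a = graphMap Q a := by
    rw [LinearMap.sub_apply, sub_eq_zero] at ha
    simp [ha]
  rw [map_zero]
  exact Submodule.disjoint_def.1 hPQ _ (LinearMap.mem_range_self _ a)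
    (hPa ▸ LinearMap.mem_range_self _ a)

theorem exists_range_graphMap_eq [FiniteDimensional K V] (h : IsCompl A B) {C : Submodule K V}
    (hCB : Disjoint C B) (hCA : finrank K C = finrank K A) :
    ∃ N : A →ₗ[K] B, LinearMap.range (graphMap N) = C := by
  let πA := Submodule.projectionOnto A B h
  let πB := Submodule.projectionOnto B A h.symm
  have hinj : Injective (πA ∘ₗ C.subtype) := by
    refine (injective_iff_map_eq_zero _).2 fun c hc => Subtype.ext ?_
    exact Submodule.disjoint_def.1 hCB _ c.2 ((Submodule.projectionOnto_apply_eq_zero_iff h).1 hc)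
  let e : C ≃ₗ[K] A := LinearEquiv.ofBijective _
    ⟨hinj, (LinearMap.injective_iff_surjective_of_finrank_eq_finrank hCA).1 hinj⟩
  refine ⟨πB ∘ₗ C.subtype ∘ₗ e.symm.toLinearMap, ?_⟩
  have hgraph : graphMap (πB ∘ₗ C.subtype ∘ₗ e.symm.toLinearMap) =
      C.subtype ∘ₗ e.symm.toLinearMap := by
    ext a
    have ha : πA (e.symm a) = a := e.apply_symm_apply a
    nth_rw 1 [graphMap_apply, ← ha]
    exact Submodule.projection_add_projection_eq_self h _
  rw [hgraph, LinearMap.range_comp_of_range_eq_top _ e.symm.range, Submodule.range_subtype]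

theorem exists_linearEquiv_range_graphMap_eq [FiniteDimensional K V] (h : IsCompl A B)
    {C : Submodule K V} (hCA : Disjoint C A) (hCB : Disjoint C B)
    (hC : finrank K C = finrank K A) (hAB : finrank K A = finrank K B) :
    ∃ N : A ≃ₗ[K] B, LinearMap.range (graphMap (N : A →ₗ[K] B)) = C := by
  obtain ⟨N, hN⟩ := exists_range_graphMap_eq h hCB hC
  have hinj : Injective N := by
    simpa using injective_sub_of_disjoint_range_graphMap h.disjoint (P := 0) (Q := N)
      (by rwa [graphMap_zero, Submodule.range_subtype, hN, disjoint_comm])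
  have hsurj := (LinearMap.injective_iff_surjective_of_finrank_eq_finrank hAB).1 hinj
  exact ⟨.ofBijective N ⟨hinj, hsurj⟩, hN⟩

end Graph

section Transversal

variable {K V : Type*} [Field K] [AddCommGroup V] [Module K V]

theorem Submodule.exists_add_eq_of_finrank_eq_two {L : Submodule K V} (hL : finrank K L = 2)
    {u v w : V} (huv : LinearIndependent K ![u, v]) (hu : u ∈ L) (hv : v ∈ L) (hw : w ∈ L) :
    ∃ s t : K, s • u + t • v = w := by
  have hspan : Submodule.span K (Set.range ![u, v]) = L := by
    have : FiniteDimensional K L := .of_finrank_pos (by omega)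
    refine Submodule.eq_of_le_of_finrank_eq ?_ (by rw [finrank_span_eq_card huv, hL]; rfl)
    rw [Submodule.span_le, Matrix.range_cons_cons_empty]
    exact Set.insert_subset hu (Set.singleton_subset_iff.2 hv)
  rw [← hspan, Matrix.range_cons_cons_empty] at hw
  exact Submodule.mem_span_pair.1 hw

variable {A B : Submodule K V}

theorem exists_smul_eq_of_mem_line (hAB : Disjoint A B) {P Q : A →ₗ[K] B} {g : A →ₗ[K] V}
    (hg : Injective g) (hgPQ : ∀ a, g a = Q a - P a) {L : Submodule K V} (hL : finrank K L = 2)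
    {a a' : A} (ha : a ≠ 0) (ha' : a' ≠ 0) {v : V} (hv : v ≠ 0) (haL : graphMap P a ∈ L)
    (hvL : v ∈ L) (hvB : v ∈ B) (ha'L : graphMap Q a' ∈ L) : ∃ c : K, c • g a = v := by
  have hli : LinearIndependent K ![v, graphMap P a] := by
    refine (LinearIndependent.pair_iff' hv).2 fun s hs => ha (Subtype.ext ?_)
    refine Submodule.disjoint_def.1 hAB _ a.2 ?_
    rw [graphMap_apply, eq_comm, ← eq_sub_iff_add_eq] at hs
    exact hs ▸ B.sub_mem (B.smul_mem s hvB) (P a).2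
  obtain ⟨t, s, hw⟩ := Submodule.exists_add_eq_of_finrank_eq_two hL hli hvL haL ha'L
  have hA : (a' : V) - s • a = t • v + s • P a - Q a' := by
    rw [graphMap_apply, graphMap_apply] at hw
    linear_combination (norm := module) -hw
  have ha'a : a' = s • a := by
    have := Submodule.disjoint_def.1 hAB _ (A.sub_mem a'.2 (A.smul_mem s a.2))
      (hA ▸ B.sub_mem (B.add_mem (B.smul_mem t hvB) (B.smul_mem s (P a).2)) (Q a').2)
    exact Subtype.ext (by simpa [sub_eq_zero] using this)
  have htv : t • v = s • g a := by
    rw [ha'a, graphMap_apply, graphMap_apply] at hw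
    rw [hgPQ]
    simp only [map_smul, Submodule.coe_smul] at hw
    linear_combination (norm := module) hw
  have ht : t ≠ 0 := by
    rintro rfl
    rw [zero_smul, eq_comm, smul_eq_zero] at htv
    rcases htv with rfl | hga
    · exact ha' (by simpa using ha'a)
    · exact ha (hg (by rw [hga, map_zero]))
  exact ⟨t⁻¹ * s, by rw [mul_smul, ← htv, smul_smul, inv_mul_cancel₀ ht, one_smul]⟩

theorem eq_map_of_submodule_le_line (hAB : Disjoint A B) {P Q : A →ₗ[K] B} {g : A →ₗ[K] V}
    (hg : Injective g) (hgPQ : ∀ a, g a = Q a - P a) {L : Submodule K V} (hL : finrank K L = 2)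
    (p : ℙ K A) {q r : ℙ K V} (hpL : (map (graphMap P) (graphMap_injective hAB P) p).submodule ≤ L)
    (hqL : q.submodule ≤ L) (hqB : q.submodule ≤ B) (hrL : r.submodule ≤ L)
    (hrQ : r.submodule ≤ LinearMap.range (graphMap Q)) :
    q = map g hg p := by
  obtain ⟨p', rfl⟩ := exists_map_eq_of_submodule_le_range (graphMap_injective hAB Q) hrQ
  induction p using ind with | h a ha =>
  induction p' using ind with | h a' ha' =>
  rw [map_mk, submodule_mk, Submodule.span_singleton_le_iff_mem] at hpL hrL
  rw [submodule_eq, Submodule.span_singleton_le_iff_mem] at hqL hqB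
  obtain ⟨c, hc⟩ := exists_smul_eq_of_mem_line hAB hg hgPQ hL ha ha' q.rep_nonzero hpL hqL hqB hrL
  rw [map_mk, ← q.mk_rep, mk_eq_mk_iff']
  exact ⟨c, hc⟩

end Transversal

section Scalar

variable {K U : Type*} [Field K] [AddCommGroup U] [Module K U]

theorem Module.End.exists_eq_smul_one_of_mul_self [NeZero (2 : K)] {f : Module.End K U}
    (h₁ : ∃ a : K, f * f = a • 1) (h₂ : ∃ b : K, (f - 1) * (f - 1) = b • 1) :
    ∃ c : K, f = c • 1 := by
  obtain ⟨a, ha⟩ := h₁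
  obtain ⟨b, hb⟩ := h₂
  have h2f : (2 : K) • f = (a + 1 - b) • 1 := by
    have : (f - 1) * (f - 1) = f * f - 2 • f + 1 := by noncomm_ring
    rw [this, ha] at hb
    linear_combination (norm := module) -hb
  refine ⟨(a + 1 - b) / 2, ?_⟩
  rw [div_eq_inv_mul, mul_smul, ← h2f, smul_smul, inv_mul_cancel₀ two_ne_zero, one_smul]

theorem Projectivization.map_comp_self_ne_id {f : Module.End K U} (hf : Injective f)
    (h : ¬ ∃ c : K, f * f = c • 1) : map f hf ∘ map f hf ≠ id := fun hid =>
  h (exists_eq_smul_one_of_map_eq_id (hf.comp hf) (by rw [← hid]; exact map_comp f hf f hf _))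

theorem Projectivization.image_map_eq_and_ne_id (e : U ≃ₗ[K] U) {S : Set (ℙ K U)}
    (hS : map (e : Module.End K U) e.injective ⁻¹' S = S)
    (he : ¬ ∃ c : K, (e : Module.End K U) * e = c • 1) :
    map (e : Module.End K U) e.injective '' S = S ∧ map (e : Module.End K U) e.injective ≠ id ∧
      map (e : Module.End K U) e.injective ∘ map (e : Module.End K U) e.injective ≠ id := by
  refine ⟨?_, fun h => map_comp_self_ne_id e.injective he (by rw [h]; rfl),
    map_comp_self_ne_id e.injective he⟩
  calc _ = map (e : Module.End K U) e.injective '' (map _ e.injective ⁻¹' S) := by rw [hS]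
    _ = S := Set.image_preimage_eq S (map_surjective e)

end Scalar

section Quadric

variable {K V : Type*} [Field K] [AddCommGroup V] [Module K V] {A B : Submodule K V}

theorem exists_quadraticForm_vanishing_on_graphs (h : IsCompl A B) (hA : finrank K A = 2)
    (N : A ≃ₗ[K] B) (c : K) : ∃ q : QuadraticForm K V, q ≠ 0 ∧ ∀ v,
      (v ∈ A ∨ v ∈ B ∨ v ∈ LinearMap.range (graphMap (N : A →ₗ[K] B)) ∨
        v ∈ LinearMap.range (graphMap (c • (N : A →ₗ[K] B)))) → q v = 0 := by
  have := Module.finite_of_finrank_eq_succ hA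
  let b := Module.finBasisOfFinrankEq K A hA
  let x : V →ₗ[K] A := Submodule.projectionOnto A B h
  let y : V →ₗ[K] A := N.symm.toLinearMap ∘ₗ Submodule.projectionOnto B A h.symm
  have hx : ∀ P : A →ₗ[K] B, ∀ a, x (graphMap P a) = a := fun P a => by
    simp [x, Submodule.projectionOnto_apply_left, Submodule.projectionOnto_apply_right]
  have hy : ∀ P : A →ₗ[K] B, ∀ a, y (graphMap P a) = N.symm (P a) := fun P a => by
    simp [y, Submodule.projectionOnto_apply_left, Submodule.projectionOnto_apply_right]
  -- `q v = ω (x v) (y v)` for the determinant form `ω` of `b`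
  let q : QuadraticForm K V := QuadraticMap.linMulLin (b.coord 0 ∘ₗ x) (b.coord 1 ∘ₗ y) -
    QuadraticMap.linMulLin (b.coord 1 ∘ₗ x) (b.coord 0 ∘ₗ y)
  have hq : ∀ v, q v = b.coord 0 (x v) * b.coord 1 (y v) - b.coord 1 (x v) * b.coord 0 (y v) :=
    fun v => rfl
  refine ⟨q, fun h0 => ?_, ?_⟩
  · have hx₀ : x (b 0 + N (b 1)) = b 0 := by
      simp [x, Submodule.projectionOnto_apply_left, Submodule.projectionOnto_apply_right]
    have hy₀ : y (b 0 + N (b 1)) = b 1 := by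
      simp [y, Submodule.projectionOnto_apply_left, Submodule.projectionOnto_apply_right]
    have := hq (b 0 + N (b 1))
    rw [h0, hx₀, hy₀] at this
    simp at this
  · rintro v (hv | hv | ⟨a, rfl⟩ | ⟨a, rfl⟩)
    · simp [hq, y, (Submodule.projectionOnto_apply_eq_zero_iff h.symm).2 hv]
    · simp [hq, x, (Submodule.projectionOnto_apply_eq_zero_iff h).2 hv]
    · simp only [hq, hx, hy, LinearEquiv.coe_coe, LinearEquiv.symm_apply_apply]
      ring
    · simp only [hq, hx, hy, LinearMap.smul_apply, LinearEquiv.coe_coe, map_smul,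
        LinearEquiv.symm_apply_apply, smul_eq_mul]
      ring

end Quadric

namespace HalfGridHyp

variable {R : Fin 4 → Submodule ℂ (Fin 4 → ℂ)} {Z : Fin 4 → Set (ℙ ℂ (Fin 4 → ℂ))}

theorem disjoint (hyp : HalfGridHyp R Z) {x y : Fin 4} (hxy : x ≠ y) : Disjoint (R x) (R y) :=
  disjoint_iff.2 (hyp.skew x y hxy)

theorem isCompl (hyp : HalfGridHyp R Z) {x y : Fin 4} (hxy : x ≠ y) : IsCompl (R x) (R y) := by
  refine (Submodule.isCompl_iff_disjoint _ _ ?_).2 (hyp.disjoint hxy)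
  simp [hyp.finrank_eq]

theorem eq_of_mem_of_submodule_le (hyp : HalfGridHyp R Z) {x y : Fin 4} {p : ℙ ℂ (Fin 4 → ℂ)}
    (hp : p ∈ Z x) (hpy : p.submodule ≤ R y) : x = y := by
  by_contra hxy
  have hrep := p.submodule_eq ▸ Submodule.mem_span_singleton_self p.rep
  exact p.rep_nonzero (Submodule.disjoint_def.1 (hyp.disjoint hxy) _
    (hyp.mem_line x p hp hrep) (hpy hrep))

def IsTransversal (Z : Fin 4 → Set (ℙ ℂ (Fin 4 → ℂ))) (x : Fin 4)
    (L : Submodule ℂ (Fin 4 → ℂ)) : Prop :=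
  finrank ℂ L = 2 ∧ ∀ y ≠ x, ∃ q ∈ Z y, q.submodule ≤ L

theorem exists_isTransversal (hyp : HalfGridHyp R Z) {x y : Fin 4} (hyx : y ≠ x)
    {p : ℙ ℂ (Fin 4 → ℂ)} (hp : p ∈ Z y) : ∃ L, IsTransversal Z x L ∧ p.submodule ≤ L := by
  obtain ⟨ℓ, hℓ, -, hmeet, hgrid⟩ := hyp.grid x
  have hp' : p ∈ (⋃ y, Z y) \ Z x :=
    ⟨Set.mem_iUnion.2 ⟨y, hp⟩,
      fun hpx => hyx (hyp.eq_of_mem_of_submodule_le hp (hyp.mem_line x p hpx))⟩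
  rw [← hgrid] at hp'
  obtain ⟨i, -, -, hpi, -⟩ := hp'
  refine ⟨ℓ i, ⟨hℓ i, fun z hz => ?_⟩, hpi⟩
  obtain ⟨q, ⟨hqi, hqz⟩, -⟩ := hmeet i z hz
  have hq : q ∈ (⋃ y, Z y) \ Z x := hgrid ▸ ⟨i, z, hz, hqi, hqz⟩
  obtain ⟨z', hqz'⟩ := Set.mem_iUnion.1 hq.1
  exact ⟨q, hyp.eq_of_mem_of_submodule_le hqz' hqz ▸ hqz', hqi⟩

theorem mem_iff_mem_of_isTransversal (hyp : HalfGridHyp R Z) {x y z : Fin 4} (hyx : y ≠ x)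
    (hzx : z ≠ x) {α : Type*} {φ ψ : α → ℙ ℂ (Fin 4 → ℂ)}
    (hφ : ∀ q : ℙ ℂ (Fin 4 → ℂ), q.submodule ≤ R y → ∃ p, φ p = q) (hψ : Injective ψ)
    (hψz : ∀ p, (ψ p).submodule ≤ R z)
    (htrans : ∀ L p q, IsTransversal Z x L → (φ p).submodule ≤ L → q.submodule ≤ L →
      q.submodule ≤ R z → q = ψ p) (p : α) :
    φ p ∈ Z y ↔ ψ p ∈ Z z := by
  constructor
  · intro hp
    obtain ⟨L, hL, hpL⟩ := hyp.exists_isTransversal hyx hp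
    obtain ⟨q, hq, hqL⟩ := hL.2 z hzx
    rwa [htrans L p q hL hpL hqL (hyp.mem_line z q hq)] at hq
  · intro hp
    obtain ⟨L, hL, hpL⟩ := hyp.exists_isTransversal hzx hp
    obtain ⟨q, hq, hqL⟩ := hL.2 y hyx
    obtain ⟨p', rfl⟩ := hφ q (hyp.mem_line y q hq)
    rwa [hψ (htrans L p' (ψ p) hL hqL hpL (hψz p))]

theorem mem_iff_mem_of_graphs (hyp : HalfGridHyp R Z) {x y z w : Fin 4} (hyx : y ≠ x)
    (hzx : z ≠ x) (hwx : w ≠ x) {A : Submodule ℂ (Fin 4 → ℂ)} (hA : Disjoint A (R z))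
    {P Q : A →ₗ[ℂ] R z} (hP : LinearMap.range (graphMap P) = R y)
    (hQ : LinearMap.range (graphMap Q) = R w) {g : A →ₗ[ℂ] Fin 4 → ℂ} (hg : Injective g)
    (hgPQ : ∀ a, g a = Q a - P a) (p : ℙ ℂ A) :
    map (graphMap P) (graphMap_injective hA P) p ∈ Z y ↔ map g hg p ∈ Z z := by
  refine hyp.mem_iff_mem_of_isTransversal hyx hzx
    (fun q hq => exists_map_eq_of_submodule_le_range _ (hP ▸ hq)) (map_injective _ _)
    (fun p => (submodule_map_le_range _ p).trans ?_) (fun L p q hL hpL hqL hqz => ?_) p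
  · rintro _ ⟨a, rfl⟩
    rw [hgPQ]
    exact (R z).sub_mem (Q a).2 (P a).2
  · obtain ⟨r, hr, hrL⟩ := hL.2 w hwx
    exact eq_map_of_submodule_le_line hA hg hgPQ hL.1 p hpL hqL hqz hrL (hQ ▸ hyp.mem_line w r hr)

theorem exists_graphs_eq (hyp : HalfGridHyp R Z) : ∃ N M : R 0 ≃ₗ[ℂ] R 1,
    LinearMap.range (graphMap (N : R 0 →ₗ[ℂ] R 1)) = R 2 ∧
      LinearMap.range (graphMap (M : R 0 →ₗ[ℂ] R 1)) = R 3 := by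
  have h01 := hyp.isCompl (x := 0) (y := 1) (by decide)
  have hrank : ∀ x y, finrank ℂ (R x) = finrank ℂ (R y) := fun x y => by
    rw [hyp.finrank_eq, hyp.finrank_eq]
  obtain ⟨N, hN⟩ := exists_linearEquiv_range_graphMap_eq h01 (hyp.disjoint (x := 2) (by decide))
    (hyp.disjoint (by decide)) (hrank 2 0) (hrank 0 1)
  obtain ⟨M, hM⟩ := exists_linearEquiv_range_graphMap_eq h01 (hyp.disjoint (x := 3) (by decide))
    (hyp.disjoint (by decide)) (hrank 3 0) (hrank 0 1)
  exact ⟨N, M, hN, hM⟩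

theorem preimage_map_trans_symm (hyp : HalfGridHyp R Z) {N M : R 0 ≃ₗ[ℂ] R 1}
    (hN : LinearMap.range (graphMap (N : R 0 →ₗ[ℂ] R 1)) = R 2)
    (hM : LinearMap.range (graphMap (M : R 0 →ₗ[ℂ] R 1)) = R 3) :
    map ((M.trans N.symm : R 0 ≃ₗ[ℂ] R 0) : Module.End ℂ (R 0)) (LinearEquiv.injective _) ⁻¹'
        (map (R 0).subtype (R 0).injective_subtype ⁻¹' Z 0) =
      map (R 0).subtype (R 0).injective_subtype ⁻¹' Z 0 := by
  have h01 := hyp.disjoint (x := 0) (y := 1) (by decide)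
  have h0 : LinearMap.range (graphMap (0 : R 0 →ₗ[ℂ] R 1)) = R 0 := by
    rw [graphMap_zero, Submodule.range_subtype]
  have hα := hyp.mem_iff_mem_of_graphs (x := 3) (by decide) (by decide) (by decide) h01 h0 hN
    (g := (R 1).subtype ∘ₗ N.toLinearMap) ((R 1).injective_subtype.comp N.injective)
    (fun a => by simp)
  have hβ := hyp.mem_iff_mem_of_graphs (x := 2) (by decide) (by decide) (by decide) h01 h0 hM
    (g := (R 1).subtype ∘ₗ M.toLinearMap) ((R 1).injective_subtype.comp M.injective)
    (fun a => by simp)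
  simp only [graphMap_zero] at hα hβ
  ext p
  simp only [Set.mem_preimage]
  rw [hα, hβ,
    map_map_of_comp_eq (h := (R 1).subtype ∘ₗ M.toLinearMap) _ _
      ((R 1).injective_subtype.comp M.injective)]
  ext; simp

theorem injective_sub (hyp : HalfGridHyp R Z) {N M : R 0 ≃ₗ[ℂ] R 1}
    (hN : LinearMap.range (graphMap (N : R 0 →ₗ[ℂ] R 1)) = R 2)
    (hM : LinearMap.range (graphMap (M : R 0 →ₗ[ℂ] R 1)) = R 3) :
    Injective ((M : R 0 →ₗ[ℂ] R 1) - (N : R 0 →ₗ[ℂ] R 1)) :=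
  injective_sub_of_disjoint_range_graphMap (hyp.disjoint (x := 0) (y := 1) (by decide))
    (by rw [hN, hM]; exact hyp.disjoint (by decide))

theorem injective_trans_symm_sub_one (hyp : HalfGridHyp R Z) {N M : R 0 ≃ₗ[ℂ] R 1}
    (hN : LinearMap.range (graphMap (N : R 0 →ₗ[ℂ] R 1)) = R 2)
    (hM : LinearMap.range (graphMap (M : R 0 →ₗ[ℂ] R 1)) = R 3) :
    Injective ⇑((M.trans N.symm : Module.End ℂ (R 0)) - 1) := by
  refine Injective.of_comp (f := N) ?_
  convert hyp.injective_sub hN hM using 1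
  ext a
  simp

theorem preimage_map_trans_symm_sub_one (hyp : HalfGridHyp R Z) {N M : R 0 ≃ₗ[ℂ] R 1}
    (hN : LinearMap.range (graphMap (N : R 0 →ₗ[ℂ] R 1)) = R 2)
    (hM : LinearMap.range (graphMap (M : R 0 →ₗ[ℂ] R 1)) = R 3) (g : R 0 ≃ₗ[ℂ] R 0)
    (hg : (g : Module.End ℂ (R 0)) = (M.trans N.symm : Module.End ℂ (R 0)) - 1) :
    map (g : Module.End ℂ (R 0)) g.injective ⁻¹'
        (map (R 0).subtype (R 0).injective_subtype ⁻¹' Z 0) =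
      map (R 0).subtype (R 0).injective_subtype ⁻¹' Z 0 := by
  have h01 := hyp.disjoint (x := 0) (y := 1) (by decide)
  have h0 : LinearMap.range (graphMap (0 : R 0 →ₗ[ℂ] R 1)) = R 0 := by
    rw [graphMap_zero, Submodule.range_subtype]
  have hNi : Injective ((R 1).subtype ∘ₗ N.toLinearMap) :=
    (R 1).injective_subtype.comp N.injective
  have hMNi : Injective ((R 1).subtype ∘ₗ (M.toLinearMap - N.toLinearMap)) :=
    (R 1).injective_subtype.comp (hyp.injective_sub hN hM)
  have hα := hyp.mem_iff_mem_of_graphs (x := 3) (by decide) (by decide) (by decide) h01 h0 hN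
    hNi (fun a => by simp)
  have hα' := hyp.mem_iff_mem_of_graphs (x := 3) (by decide) (by decide) (by decide) h01 hN h0
    (g := -((R 1).subtype ∘ₗ N.toLinearMap)) (neg_injective.comp hNi) (fun a => by simp)
  have hγ := hyp.mem_iff_mem_of_graphs (x := 0) (by decide) (by decide) (by decide) h01 hN hM
    hMNi (fun a => rfl)
  simp only [graphMap_zero] at hα
  ext p
  simp only [Set.mem_preimage]
  -- `[f a - a] ∈ Z 0 ↔ [M a - N a] ∈ Z 1 ↔ [a + N a] ∈ Z 2 ↔ [-N a] ∈ Z 1 ↔ [a] ∈ Z 0`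
  rw [hα, hα, map_map_of_comp_eq _ _ hMNi, ← hγ, hα',
    map_eq_of_eq_smul hNi _ (neg_one_smul ℂ _).symm]
  ext a
  simp [hg]

theorem not_exists_trans_symm_eq_smul_one (hyp : HalfGridHyp R Z) {N M : R 0 ≃ₗ[ℂ] R 1}
    (hN : LinearMap.range (graphMap (N : R 0 →ₗ[ℂ] R 1)) = R 2)
    (hM : LinearMap.range (graphMap (M : R 0 →ₗ[ℂ] R 1)) = R 3) :
    ¬ ∃ c : ℂ, (M.trans N.symm : Module.End ℂ (R 0)) = c • 1 := by
  rintro ⟨c, hc⟩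
  have hMN : (M : R 0 →ₗ[ℂ] R 1) = c • (N : R 0 →ₗ[ℂ] R 1) := by
    refine LinearMap.ext fun a => ?_
    simpa using congr(N ($hc a))
  obtain ⟨q, hq0, hq⟩ := exists_quadraticForm_vanishing_on_graphs
    (hyp.isCompl (x := 0) (y := 1) (by decide)) (hyp.finrank_eq 0) N c
  refine hyp.no_quadric ⟨q, hq0, fun x p hp v hv => hq v ?_⟩
  have hvx := hyp.mem_line x p hp hv
  fin_cases x
  · exact .inl hvx
  · exact .inr (.inl hvx)
  · exact .inr (.inr (.inl (hN ▸ hvx)))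
  · exact .inr (.inr (.inr (hMN ▸ hM ▸ hvx)))

end HalfGridHyp

/-- Under the half-grid hypotheses for a 16-point set
`Z = Z 0 ∪ Z 1 ∪ Z 2 ∪ Z 3` on four pairwise skew lines `R 0, …, R 3`, there are an index
`x` and a projective transformation `ψ` of the line `R x` (induced by a linear
automorphism of the corresponding 2-dimensional subspace of `ℂ⁴`) mapping the 4-point set
`Z x` onto itself with `ψ ≠ id` and `ψ ∘ ψ ≠ id` (so `ψ` has order at least 3); in
particular the quadruple `Z x` admits a non-involutive symmetry, hence is harmonic or
anharmonic.  Points of `ℙ³` on the line are identified with points of `ℙ(R x)` via the map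
`ι` induced by the inclusion `R x ↪ ℂ⁴`. -/
theorem exists_non_involutive_symmetry
    (R : Fin 4 → Submodule ℂ (Fin 4 → ℂ)) (Z : Fin 4 → Set (ℙ ℂ (Fin 4 → ℂ)))
    (hyp : HalfGridHyp R Z) :
    ∃ (x : Fin 4) (f : (R x) ≃ₗ[ℂ] (R x)),
      (fun ψ ι =>
        ψ '' (ι ⁻¹' Z x) = ι ⁻¹' Z x ∧ ψ ≠ id ∧ ψ ∘ ψ ≠ id)
      (Projectivization.map f.toLinearMap f.injective)
      (Projectivization.map (R x).subtype (R x).injective_subtype) := by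
  obtain ⟨N, M, hN, hM⟩ := hyp.exists_graphs_eq
  let f : R 0 ≃ₗ[ℂ] R 0 := M.trans N.symm
  by_cases hf2 : ∃ a : ℂ, (f : Module.End ℂ (R 0)) * f = a • 1
  · let g := LinearEquiv.ofInjectiveEndo _ (hyp.injective_trans_symm_sub_one hN hM)
    refine ⟨0, g, image_map_eq_and_ne_id g (hyp.preimage_map_trans_symm_sub_one hN hM g rfl)
      fun hg2 => hyp.not_exists_trans_symm_eq_smul_one hN hM ?_⟩
    exact Module.End.exists_eq_smul_one_of_mul_self hf2 hg2
  · exact ⟨0, f, image_map_eq_and_ne_id f (hyp.preimage_map_trans_symm hN hM) hf2⟩
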